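/- arXiv:1702.05116 — 2 statements merged into one kernel-verified Lean document; each statement's English description precedes it below -/
import Mathlib

section
/- For each k ∈ {0,…,n-1}, the quintic characteristic polynomial P_k(x) given in the beacon-referenced cyclic pursuit linearization factors as P_k(x) = (x² + μ²a²)·[(x³ + μc̃_k x² + μ²a d̃_k x + μ³a² ẽ_k) - j(μĉ_k x² - μ²a d̂_k x + μ³a² ê_k)], where the coefficients c̃_k, ĉ_k, d̃_k, d̂_k, ẽ_k, ê_k are given in terms of a, b, d, λ, k, n, α*. In particular ±jμa are roots of P_k for every k. -/
/-!
With θ = kπ/n we have ωᵏ = e^{2jθ} = (1 - 2 sin²θ) + 2j sin θ cos θ, so every coefficient of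
P_k is a polynomial in sin θ and cos θ. After eliminating cos²θ = 1 - sin²θ, the factorization
is a polynomial identity, and the factor x² + μ²a² vanishes at ±jμa.
-/

open Complex Real

theorem Complex.exp_two_mul_mul_I (θ : ℝ) :
    exp ((2 * θ : ℝ) * I) = ((1 - 2 * Real.sin θ ^ 2 : ℝ) : ℂ)
      + ((2 * Real.sin θ * Real.cos θ : ℝ) : ℂ) * I := by
  rw [exp_mul_I, ← ofReal_cos, ← ofReal_sin, Real.cos_two_mul, Real.cos_sq', Real.sin_two_mul]
  push_cast
  ring

theorem Complex.exp_two_pi_mul_I_div_pow (n k : ℕ) :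
    exp (2 * π * I / n) ^ k = ((1 - 2 * Real.sin (k * π / n) ^ 2 : ℝ) : ℂ)
      + ((2 * Real.sin (k * π / n) * Real.cos (k * π / n) : ℝ) : ℂ) * I := by
  rw [← exp_two_mul_mul_I, ← exp_nat_mul]
  push_cast
  ring_nf

theorem factorization_and_roots_of_forall_eq_mul {P Q : ℂ → ℂ} (μ a : ℂ)
    (h : ∀ x, P x = (x ^ 2 + μ ^ 2 * a ^ 2) * Q x) :
    (∀ x, P x = (x ^ 2 + μ ^ 2 * a ^ 2) * Q x) ∧ P (I * μ * a) = 0 ∧ P (-(I * μ * a)) = 0 := by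
  have hroot : (I * μ * a) ^ 2 + μ ^ 2 * a ^ 2 = 0 := by
    linear_combination μ ^ 2 * a ^ 2 * I_sq
  exact ⟨h, by rw [h, hroot, zero_mul], by rw [h, neg_sq, hroot, zero_mul]⟩

theorem stmt10_general (μ a b d lam αs : ℝ) (n : ℕ) (k : ℕ) (m : ℤ)
    (ω : ℂ) (hω : ω = Complex.exp (2 * Real.pi * Complex.I / n))
    (ct cH dt dH et eH : ℝ)
    (hct : ct = b + a * (1 - lam) * (Real.sin (k * Real.pi / n)) ^ 2 *
      Real.cot ((m : ℝ) * Real.pi / n))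
    (hcH : cH = a * (1 - lam) * Real.sin (k * Real.pi / n) * Real.cos (k * Real.pi / n) *
      Real.cot ((m : ℝ) * Real.pi / n))
    (hdt : dt = d * (Real.sin (k * Real.pi / n)) ^ 2 +
      lam * a * (Real.cos (k * Real.pi / n)) ^ 2)
    (hdH : dH = (lam * a - d) * Real.sin (k * Real.pi / n) * Real.cos (k * Real.pi / n))
    (het : et = (1 - lam) * Real.cos αs * (Real.sin (k * Real.pi / n)) ^ 2)
    (heH : eH = (1 - lam) * Real.cos αs * Real.sin (k * Real.pi / n) *
      Real.cos (k * Real.pi / n))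
    (P : ℂ → ℂ)
    (hP : ∀ x : ℂ, P x =
      x ^ 5
      + (μ : ℂ) * ((b : ℂ) + ((a : ℂ) / 2) * (1 - (lam : ℂ)) * (1 - ω ^ k) *
          ((Real.cot ((m : ℝ) * Real.pi / n) : ℝ) : ℂ)) * x ^ 4
      + ((μ : ℂ) ^ 2 * (a : ℂ) / 2) * (2 * (a : ℂ) + (1 - ω ^ k) * (d : ℂ) +
          (lam : ℂ) * (a : ℂ) * (1 + ω ^ k)) * x ^ 3
      + ((μ : ℂ) ^ 3 * (a : ℂ) ^ 2 / 2) * (1 - (lam : ℂ)) * (1 - ω ^ k) *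
          (((Real.cos αs : ℝ) : ℂ) + (a : ℂ) *
            ((Real.cot ((m : ℝ) * Real.pi / n) : ℝ) : ℂ)) * x ^ 2
      + (μ : ℂ) ^ 3 * (a : ℂ) ^ 2 * (b : ℂ) * x ^ 2
      + ((μ : ℂ) ^ 4 * (a : ℂ) ^ 3 / 2) * ((1 - ω ^ k) * (d : ℂ) +
          (lam : ℂ) * (a : ℂ) * (1 + ω ^ k)) * x
      + ((μ : ℂ) ^ 5 * (a : ℂ) ^ 4 / 2) * (1 - ω ^ k) * (1 - (lam : ℂ)) *
          ((Real.cos αs : ℝ) : ℂ)) :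
    (∀ x : ℂ, P x = (x ^ 2 + (μ : ℂ) ^ 2 * (a : ℂ) ^ 2) *
        (((x ^ 3 + (μ : ℂ) * (ct : ℂ) * x ^ 2 + (μ : ℂ) ^ 2 * (a : ℂ) * (dt : ℂ) * x
            + (μ : ℂ) ^ 3 * (a : ℂ) ^ 2 * (et : ℂ)))
          - Complex.I * ((μ : ℂ) * (cH : ℂ) * x ^ 2 - (μ : ℂ) ^ 2 * (a : ℂ) * (dH : ℂ) * x
            + (μ : ℂ) ^ 3 * (a : ℂ) ^ 2 * (eH : ℂ)))) ∧
      P (Complex.I * μ * a) = 0 ∧ P (-(Complex.I * μ * a)) = 0 := by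
  refine factorization_and_roots_of_forall_eq_mul (μ : ℂ) a fun x ↦ ?_
  rw [hP, hω, exp_two_pi_mul_I_div_pow, hct, hcH, hdt, Real.cos_sq', hdH, het, heH]
  push_cast
  ring

/-- The quintic characteristic polynomial P_k factors as
(x² + μ²a²)·[(x³ + μc̃_k x² + μ²a d̃_k x + μ³a² ẽ_k) - j(μĉ_k x² - μ²a d̂_k x + μ³a² ê_k)];
in particular ±jμa are roots of P_k. -/
theorem stmt10 (μ a b d lam αs α₀ : ℝ) (n : ℕ) (hn : 0 < n) (k : ℕ) (hk : k < n) (m : ℤ)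
    (ω : ℂ) (hω : ω = Complex.exp (2 * Real.pi * Complex.I / n))
    (hb : b = lam * Real.sin α₀ + (1 - lam) * Real.cos αs)
    (hd : d = a + (1 - lam) * Real.cos αs * Real.cot ((m : ℝ) * Real.pi / n))
    (ct cH dt dH et eH : ℝ)
    (hct : ct = b + a * (1 - lam) * (Real.sin (k * Real.pi / n)) ^ 2 *
      Real.cot ((m : ℝ) * Real.pi / n))
    (hcH : cH = a * (1 - lam) * Real.sin (k * Real.pi / n) * Real.cos (k * Real.pi / n) *
      Real.cot ((m : ℝ) * Real.pi / n))
    (hdt : dt = d * (Real.sin (k * Real.pi / n)) ^ 2 +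
      lam * a * (Real.cos (k * Real.pi / n)) ^ 2)
    (hdH : dH = (lam * a - d) * Real.sin (k * Real.pi / n) * Real.cos (k * Real.pi / n))
    (het : et = (1 - lam) * Real.cos αs * (Real.sin (k * Real.pi / n)) ^ 2)
    (heH : eH = (1 - lam) * Real.cos αs * Real.sin (k * Real.pi / n) *
      Real.cos (k * Real.pi / n))
    (P : ℂ → ℂ)
    (hP : ∀ x : ℂ, P x =
      x ^ 5
      + (μ : ℂ) * ((b : ℂ) + ((a : ℂ) / 2) * (1 - (lam : ℂ)) * (1 - ω ^ k) *
          ((Real.cot ((m : ℝ) * Real.pi / n) : ℝ) : ℂ)) * x ^ 4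
      + ((μ : ℂ) ^ 2 * (a : ℂ) / 2) * (2 * (a : ℂ) + (1 - ω ^ k) * (d : ℂ) +
          (lam : ℂ) * (a : ℂ) * (1 + ω ^ k)) * x ^ 3
      + ((μ : ℂ) ^ 3 * (a : ℂ) ^ 2 / 2) * (1 - (lam : ℂ)) * (1 - ω ^ k) *
          (((Real.cos αs : ℝ) : ℂ) + (a : ℂ) *
            ((Real.cot ((m : ℝ) * Real.pi / n) : ℝ) : ℂ)) * x ^ 2
      + (μ : ℂ) ^ 3 * (a : ℂ) ^ 2 * (b : ℂ) * x ^ 2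
      + ((μ : ℂ) ^ 4 * (a : ℂ) ^ 3 / 2) * ((1 - ω ^ k) * (d : ℂ) +
          (lam : ℂ) * (a : ℂ) * (1 + ω ^ k)) * x
      + ((μ : ℂ) ^ 5 * (a : ℂ) ^ 4 / 2) * (1 - ω ^ k) * (1 - (lam : ℂ)) *
          ((Real.cos αs : ℝ) : ℂ)) :
    (∀ x : ℂ, P x = (x ^ 2 + (μ : ℂ) ^ 2 * (a : ℂ) ^ 2) *
        (((x ^ 3 + (μ : ℂ) * (ct : ℂ) * x ^ 2 + (μ : ℂ) ^ 2 * (a : ℂ) * (dt : ℂ) * x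
            + (μ : ℂ) ^ 3 * (a : ℂ) ^ 2 * (et : ℂ)))
          - Complex.I * ((μ : ℂ) * (cH : ℂ) * x ^ 2 - (μ : ℂ) ^ 2 * (a : ℂ) * (dH : ℂ) * x
            + (μ : ℂ) ^ 3 * (a : ℂ) ^ 2 * (eH : ℂ)))) ∧
      P (Complex.I * μ * a) = 0 ∧ P (-(Complex.I * μ * a)) = 0 :=
  stmt10_general μ a b d lam αs n k m ω hω ct cH dt dH et eH hct hcH hdt hdH het heH P hP
end

section
/- Under the hypotheses μ > 0, λ ∈ (0,1), k ∈ {1,…,n-1}, and (1-λ)sin(kπ/n - α) + λ cos α₀ ≤ 0, the open region Δ = {(κ₁, ρ₁) : kπ/n < κ₁ < kπ/n + π, ρ₁ > 0} is positively invariant for the flow of κ̇₁ = -μ[(1-λ)sin(κ₁-α) + λcos(κ₁ - kπ/n - α₀)] + (2λ/ρ₁)cos(κ₁ - kπ/n)sin(kπ/n), ρ̇₁ = 2 sin(κ₁ - kπ/n) sin(kπ/n): specifically, on Δ one has ρ̇₁ > 0, on the boundary κ₁ = kπ/n one has κ̇₁ > 0, and on the boundary κ₁ = kπ/n + π one has κ̇₁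 < 0. -/
/-!
Both boundary claims reduce to one: every term of κ̇₁ is a sine or cosine of κ₁ shifted by a
constant, so κ̇₁ changes sign under κ₁ ↦ κ₁ + π, and at κ₁ = kπ/n the sign hypothesis makes
the drift term nonnegative while the coupling term is `(2λ/ρ₁) sin(kπ/n) > 0`.
-/

open Real

/-- `κ̇₁`, with `θ` standing for `kπ/n`. -/
noncomputable def kappaDot (μ lam α α₀ θ κ ρ : ℝ) : ℝ :=
  -μ * ((1 - lam) * sin (κ - α) + lam * cos (κ - θ - α₀)) +
    (2 * lam / ρ) * cos (κ - θ) * sin θ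

section kappaDot

variable {μ lam α α₀ θ ρ : ℝ}

theorem kappaDot_add_pi (κ : ℝ) :
    kappaDot μ lam α α₀ θ (κ + π) ρ = -kappaDot μ lam α α₀ θ κ ρ := by
  have hsin : sin (κ + π - α) = -sin (κ - α) := by
    rw [add_sub_right_comm, sin_add_pi]
  have hcos₁ : cos (κ + π - θ - α₀) = -cos (κ - θ - α₀) := by
    rw [add_sub_right_comm, add_sub_right_comm, cos_add_pi]
  have hcos₂ : cos (κ + π - θ) = -cos (κ - θ) := by
    rw [add_sub_right_comm, cos_add_pi]
  simp only [kappaDot, hsin, hcos₁, hcos₂]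
  ring

theorem kappaDot_self_pos (hμ : 0 ≤ μ) (hlam : 0 < lam) (hρ : 0 < ρ) (hθ : 0 < sin θ)
    (hcond : (1 - lam) * sin (θ - α) + lam * cos α₀ ≤ 0) :
    0 < kappaDot μ lam α α₀ θ θ ρ := by
  have hdrift : 0 ≤ -μ * ((1 - lam) * sin (θ - α) + lam * cos α₀) :=
    mul_nonneg_of_nonpos_of_nonpos (neg_nonpos.mpr hμ) hcond
  have hcoupling : 0 < 2 * lam / ρ * sin θ := by positivity
  rw [kappaDot, sub_self, cos_zero, zero_sub, cos_neg]
  linarith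

end kappaDot

theorem sin_natCast_mul_pi_div_pos {k n : ℕ} (hk : 0 < k) (hkn : k < n) :
    0 < sin (k * π / n) := by
  have hn : (0 : ℝ) < n := by exact_mod_cast hk.trans hkn
  apply sin_pos_of_pos_of_lt_pi (by positivity)
  rw [div_lt_iff₀ hn, mul_comm]
  exact mul_lt_mul_of_pos_left (by exact_mod_cast hkn) pi_pos

theorem stmt18_general (n k : ℕ) (hk : 1 ≤ k) (hk2 : k < n)
    (μ lam α α₀ : ℝ) (hμ : 0 < μ) (hlam0 : 0 < lam)
    (hcond : (1 - lam) * Real.sin (k * Real.pi / n - α) + lam * Real.cos α₀ ≤ 0)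
    (f g : ℝ → ℝ → ℝ)
    (hf : ∀ κ ρ : ℝ, f κ ρ =
      -μ * ((1 - lam) * Real.sin (κ - α) + lam * Real.cos (κ - k * Real.pi / n - α₀)) +
        (2 * lam / ρ) * Real.cos (κ - k * Real.pi / n) * Real.sin (k * Real.pi / n))
    (hg : ∀ κ ρ : ℝ, g κ ρ =
      2 * Real.sin (κ - k * Real.pi / n) * Real.sin (k * Real.pi / n)) :
    (∀ κ ρ : ℝ, k * Real.pi / n < κ → κ < k * Real.pi / n + Real.pi → ρ > 0 →
      g κ ρ > 0) ∧
    (∀ ρ : ℝ, ρ > 0 → f (k * Real.pi / n) ρ > 0) ∧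
    (∀ ρ : ℝ, ρ > 0 → f (k * Real.pi / n + Real.pi) ρ < 0) := by
  have hθ := sin_natCast_mul_pi_div_pos hk hk2
  have hf_eq : ∀ κ ρ, f κ ρ = kappaDot μ lam α α₀ (k * π / n) κ ρ := hf
  have hlower : ∀ ρ > 0, 0 < f (k * π / n) ρ := fun ρ hρ ↦ by
    rw [hf_eq]
    exact kappaDot_self_pos hμ.le hlam0 hρ hθ hcond
  refine ⟨fun κ ρ hκ₁ hκ₂ _ ↦ ?_, hlower, fun ρ hρ ↦ ?_⟩
  · rw [hg]
    have : 0 < sin (κ - k * π / n) := sin_pos_of_pos_of_lt_pi (by linarith) (by linarith)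
    positivity
  · have := hlower ρ hρ
    rw [hf_eq] at this ⊢
    rw [kappaDot_add_pi]
    linarith

/-- If (1-λ)sin(kπ/n - α) + λ cos α₀ ≤ 0, the region
Δ = {(κ₁, ρ₁) : kπ/n < κ₁ < kπ/n + π, ρ₁ > 0} is positively invariant:
ρ̇₁ > 0 on Δ, κ̇₁ > 0 on the boundary κ₁ = kπ/n, and κ̇₁ < 0 on κ₁ = kπ/n + π. -/
theorem stmt18 (n k : ℕ) (hn : 2 ≤ n) (hk : 1 ≤ k) (hk2 : k < n)
    (μ lam α α₀ : ℝ) (hμ : 0 < μ) (hlam0 : 0 < lam) (hlam1 : lam < 1)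
    (hcond : (1 - lam) * Real.sin (k * Real.pi / n - α) + lam * Real.cos α₀ ≤ 0)
    (f g : ℝ → ℝ → ℝ)
    (hf : ∀ κ ρ : ℝ, f κ ρ =
      -μ * ((1 - lam) * Real.sin (κ - α) + lam * Real.cos (κ - k * Real.pi / n - α₀)) +
        (2 * lam / ρ) * Real.cos (κ - k * Real.pi / n) * Real.sin (k * Real.pi / n))
    (hg : ∀ κ ρ : ℝ, g κ ρ =
      2 * Real.sin (κ - k * Real.pi / n) * Real.sin (k * Real.pi / n)) :
    (∀ κ ρ : ℝ, k * Real.pi / n < κ → κ < k * Real.pi / n + Real.pi → ρ > 0 →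
      g κ ρ > 0) ∧
    (∀ ρ : ℝ, ρ > 0 → f (k * Real.pi / n) ρ > 0) ∧
    (∀ ρ : ℝ, ρ > 0 → f (k * Real.pi / n + Real.pi) ρ < 0) :=
  stmt18_general n k hk hk2 μ lam α α₀ hμ hlam0 hcond f g hf hg
end
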